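/- Let E be a real inner product space of dimension 2n with 2n ≥ 4, J a compatible almost complex structure, and R an algebraic curvature tensor on E that is an RK-tensor and has constant antiholomorphic sectional curvature ν = 0. If x, y ∈ E are orthonormal vectors with ⟨Jx,y⟩ = 0 (and hence also ⟨x,Jy⟩ = 0) such that R(x,Jx,Jy,y) = 0, then S(x,x) + S(y,y) = 0, where S is the Ricci tensor of R. -/

import Mathlib

/-!
Write `X = J x`, `Y = J y`. Vanishing antiholomorphic curvature kills `R(v, x, x, v)` for every
`v ⟂ x, X`, so the Ricci form `S(x, x)` collapses onto the complex line of `x` and equals the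
holomorphic curvature `R(X, x, x, X)`. For the second half, `R(u, v, v, u) = 0` for all `u` in the
complex line of `x` and `v` in that of `y`; polarizing gives `R(x, y, Y, X) + R(X, y, Y, x) = 0`,
which together with the Bianchi identity yields `R(x, Y, X, y) = R(x, X, Y, y) / 2`. Finally the
pairs `(x + y, X - Y)` and `(X + Y, x - y)`, antiholomorphic because `‖x‖ = ‖y‖`, give
`R(X, x, x, X) + R(Y, y, y, Y) = 3 R(x, X, Y, y)`.
-/

open scoped RealInnerProductSpace

section

variable {E : Type*} [NormedAddCommGroup E] [InnerProductSpace ℝ E]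

structure IsCurvatureTensor (R : E →ₗ[ℝ] E →ₗ[ℝ] E →ₗ[ℝ] E →ₗ[ℝ] ℝ) : Prop where
  antisymm_left : ∀ x y z u : E, R x y z u = -R y x z u
  antisymm_right : ∀ x y z u : E, R x y z u = -R x y u z
  bianchi : ∀ x y z u : E, R x y z u + R y z x u + R z x y u = 0

structure IsCompatibleComplexStructure (J : E →ₗ[ℝ] E) : Prop where
  apply_apply : ∀ x : E, J (J x) = -x
  inner_map_map : ∀ x y : E, ⟪J x, J y⟫ = ⟪x, y⟫

def HasVanishingAntiholomorphicCurvature (J : E →ₗ[ℝ] E)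
    (R : E →ₗ[ℝ] E →ₗ[ℝ] E →ₗ[ℝ] E →ₗ[ℝ] ℝ) : Prop :=
  ∀ u v : E, ⟪u, v⟫ = 0 → ⟪J u, v⟫ = 0 → R u v v u = 0

theorem OrthonormalBasis.sum_inner_mul_apply {ι : Type*} [Fintype ι]
    (b : OrthonormalBasis ι ℝ E) (f : E →ₗ[ℝ] ℝ) (z : E) :
    ∑ i, ⟪b i, z⟫ * f (b i) = f z := by
  conv_rhs => rw [← b.sum_repr' z]
  simp only [map_sum, map_smul, smul_eq_mul]

namespace IsCompatibleComplexStructure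

variable {J : E →ₗ[ℝ] E}

theorem norm_map (hJ : IsCompatibleComplexStructure J) (x : E) : ‖J x‖ = ‖x‖ := by
  rw [norm_eq_sqrt_real_inner, hJ.inner_map_map, ← norm_eq_sqrt_real_inner]

theorem inner_map_left (hJ : IsCompatibleComplexStructure J) (x y : E) :
    ⟪J x, y⟫ = -⟪x, J y⟫ := by
  have h := hJ.inner_map_map x (J y)
  rw [hJ.apply_apply, inner_neg_right] at h
  linarith

theorem inner_map_self (hJ : IsCompatibleComplexStructure J) (x : E) : ⟪x, J x⟫ = 0 := by
  have h := hJ.inner_map_left x x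
  rw [real_inner_comm] at h
  linarith

theorem inner_map_right_eq_zero (hJ : IsCompatibleComplexStructure J) {x y : E}
    (h : ⟪J x, y⟫ = 0) : ⟪x, J y⟫ = 0 := by
  rw [← neg_eq_zero, ← hJ.inner_map_left, h]

theorem map_mem_span_pair (hJ : IsCompatibleComplexStructure J) {x u : E}
    (hu : u ∈ Submodule.span ℝ {x, J x}) : J u ∈ Submodule.span ℝ {x, J x} := by
  obtain ⟨a, b, rfl⟩ := Submodule.mem_span_pair.mp hu
  refine Submodule.mem_span_pair.mpr ⟨-b, a, ?_⟩
  simp only [map_add, map_smul, hJ.apply_apply, smul_neg, neg_smul]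
  abel

theorem inner_eq_zero_of_mem_span_pair (hJ : IsCompatibleComplexStructure J) {x y u v : E}
    (hxy : ⟪x, y⟫ = 0) (hJxy : ⟪J x, y⟫ = 0)
    (hu : u ∈ Submodule.span ℝ {x, J x}) (hv : v ∈ Submodule.span ℝ {y, J y}) :
    ⟪u, v⟫ = 0 := by
  obtain ⟨a, b, rfl⟩ := Submodule.mem_span_pair.mp hu
  obtain ⟨c, d, rfl⟩ := Submodule.mem_span_pair.mp hv
  simp only [inner_add_left, inner_add_right, real_inner_smul_left, real_inner_smul_right,
    hJ.inner_map_map, hxy, hJxy, hJ.inner_map_right_eq_zero hJxy, mul_zero, add_zero]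

end IsCompatibleComplexStructure

namespace IsCurvatureTensor

variable {R : E →ₗ[ℝ] E →ₗ[ℝ] E →ₗ[ℝ] E →ₗ[ℝ] ℝ}

theorem pair_comm (hR : IsCurvatureTensor R) (x y z u : E) : R x y z u = R z u x y := by
  have h₁ := hR.bianchi x y z u
  have h₂ := hR.bianchi y z u x
  have h₃ := hR.bianchi z u x y
  have h₄ := hR.bianchi u x y z
  linarith [hR.antisymm_left z x y u, hR.antisymm_right x z y u, hR.antisymm_left u y z x,
    hR.antisymm_right y u x z, hR.antisymm_right u x y z, hR.antisymm_right y z x u,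
    hR.antisymm_right z u x y, hR.antisymm_right x y z u]

theorem apply_reverse (hR : IsCurvatureTensor R) (x y z u : E) : R x y z u = R u z y x := by
  rw [hR.pair_comm, hR.antisymm_left, hR.antisymm_right, neg_neg]

theorem apply_swap_swap (hR : IsCurvatureTensor R) (x y z u : E) : R x y z u = R y x u z := by
  rw [hR.antisymm_left, hR.antisymm_right, neg_neg]

theorem apply_self_left (hR : IsCurvatureTensor R) (x z u : E) : R x x z u = 0 := by
  linarith [hR.antisymm_left x x z u]

theorem apply_self_right (hR : IsCurvatureTensor R) (x y z : E) : R x y z z = 0 := by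
  linarith [hR.antisymm_right x y z z]

theorem sectional_add_sub_sectional_sub (hR : IsCurvatureTensor R) (u v w : E) :
    R u (v + w) (v + w) u - R u (v - w) (v - w) u = 4 * R u v w u := by
  simp only [map_add, map_sub, LinearMap.add_apply, LinearMap.sub_apply]
  linear_combination 2 * hR.apply_reverse u w v u

/- `c + d` stands in front in the second summand because instance search does not find the
additive group structure on `E →ₗ[ℝ] E →ₗ[ℝ] E →ₗ[ℝ] ℝ`, so `R (a - b)` would not expand. -/
theorem sectional_add_sub_add_sectional_add_sub (hR : IsCurvatureTensor R) (a b c d : E) :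
    R (a + b) (c - d) (c - d) (a + b) + R (c + d) (a - b) (a - b) (c + d) =
      2 * (R a c c a + R a d d a + R b c c b + R b d d b) - 4 * (R a c d b + R a d c b) := by
  simp only [map_add, map_sub, LinearMap.add_apply, LinearMap.sub_apply,
    hR.apply_swap_swap c, hR.apply_swap_swap d]
  linear_combination -2 * hR.apply_reverse b d c a - 2 * hR.apply_reverse b c d a

end IsCurvatureTensor

namespace HasVanishingAntiholomorphicCurvature

variable {J : E →ₗ[ℝ] E} {R : E →ₗ[ℝ] E →ₗ[ℝ] E →ₗ[ℝ] E →ₗ[ℝ] ℝ}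

theorem of_norm_eq_one
    (h : ∀ x y : E, ‖x‖ = 1 → ‖y‖ = 1 → ⟪x, y⟫ = 0 → ⟪J x, y⟫ = 0 → R x y y x = 0) :
    HasVanishingAntiholomorphicCurvature J R := by
  intro u v huv hJuv
  rcases eq_or_ne u 0 with rfl | hu
  · simp
  rcases eq_or_ne v 0 with rfl | hv
  · simp
  have h₁ := h _ _ (norm_smul_inv_norm hu) (norm_smul_inv_norm hv)
    (by rw [real_inner_smul_left, real_inner_smul_right, huv, mul_zero, mul_zero])
    (by rw [map_smul, real_inner_smul_left, real_inner_smul_right, hJuv, mul_zero, mul_zero])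
  simp only [map_smul, LinearMap.smul_apply, smul_eq_mul] at h₁
  simpa [hu, hv] using h₁

theorem apply_map_right (hK : HasVanishingAntiholomorphicCurvature J R)
    (hJ : IsCompatibleComplexStructure J) {u v : E} (h₁ : ⟪u, v⟫ = 0) (h₂ : ⟪u, J v⟫ = 0) :
    R u (J v) (J v) u = 0 :=
  hK u (J v) h₂ (by rw [hJ.inner_map_map, h₁])

theorem apply_eq_zero_of_mem_span_pair (hK : HasVanishingAntiholomorphicCurvature J R)
    (hJ : IsCompatibleComplexStructure J) {x y u v : E} (hxy : ⟪x, y⟫ = 0) (hJxy : ⟪J x, y⟫ = 0)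
    (hu : u ∈ Submodule.span ℝ {x, J x}) (hv : v ∈ Submodule.span ℝ {y, J y}) :
    R u v v u = 0 :=
  hK u v (hJ.inner_eq_zero_of_mem_span_pair hxy hJxy hu hv)
    (hJ.inner_eq_zero_of_mem_span_pair hxy hJxy (hJ.map_mem_span_pair hu) hv)

theorem jacobi_form_eq (hK : HasVanishingAntiholomorphicCurvature J R)
    (hR : IsCurvatureTensor R) (hJ : IsCompatibleComplexStructure J) {x : E} (hx : ‖x‖ = 1)
    (v : E) :
    R v x x v = 2 * ⟪v, J x⟫ * R (J x) x x v - ⟪v, J x⟫ ^ 2 * R (J x) x x (J x) := by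
  have hxx : ⟪x, x⟫ = 1 := by rw [real_inner_self_eq_norm_sq, hx, one_pow]
  have hJxJx : ⟪J x, J x⟫ = 1 := by rw [hJ.inner_map_map, hxx]
  have hxJx := hJ.inner_map_self x
  set α := ⟪v, x⟫
  set β := ⟪v, J x⟫
  set w := v - α • x - β • J x
  have hxw : ⟪x, w⟫ = 0 := by
    simp only [w, inner_sub_right, real_inner_smul_right, hxx, hxJx, real_inner_comm x v, α]
    ring
  have hJxw : ⟪J x, w⟫ = 0 := by
    simp only [w, inner_sub_right, real_inner_smul_right, hJxJx, real_inner_comm x (J x), hxJx,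
      real_inner_comm (J x) v, β]
    ring
  have hw : R w x x w = 0 := by rw [hR.apply_swap_swap]; exact hK x w hxw hJxw
  have hv : v = w + α • x + β • J x := by simp only [w]; abel
  rw [hv]
  simp only [map_add, map_smul, LinearMap.add_apply, LinearMap.smul_apply, smul_eq_mul,
    hR.apply_self_left, hR.apply_self_right]
  linear_combination hw + β * hR.apply_reverse w x x (J x)

theorem ricci_eq_holomorphic (hK : HasVanishingAntiholomorphicCurvature J R)
    (hR : IsCurvatureTensor R) (hJ : IsCompatibleComplexStructure J)
    {ι : Type*} [Fintype ι] (b : OrthonormalBasis ι ℝ E) {x : E} (hx : ‖x‖ = 1) :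
    ∑ i, R (b i) x x (b i) = R (J x) x x (J x) :=
  calc ∑ i, R (b i) x x (b i)
      = 2 * ∑ i, ⟪b i, J x⟫ * R (J x) x x (b i)
          - (∑ i, ⟪b i, J x⟫ ^ 2) * R (J x) x x (J x) := by
        rw [Finset.mul_sum, Finset.sum_mul, ← Finset.sum_sub_distrib]
        refine Finset.sum_congr rfl fun i _ ↦ ?_
        rw [hK.jacobi_form_eq hR hJ hx]
        ring
    _ = R (J x) x x (J x) := by
        rw [b.sum_inner_mul_apply, b.sum_sq_inner_right, hJ.norm_map, hx]
        ring

theorem holomorphic_add_holomorphic_eq (hK : HasVanishingAntiholomorphicCurvature J R)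
    (hR : IsCurvatureTensor R) (hJ : IsCompatibleComplexStructure J) {x y : E}
    (hxy : ⟪x, y⟫ = 0) (hJxy : ⟪J x, y⟫ = 0) (hnorm : ‖x‖ = ‖y‖) :
    R (J x) x x (J x) + R (J y) y y (J y) = 3 * R x (J x) (J y) y := by
  have hxJy := hJ.inner_map_right_eq_zero hJxy
  have hyJx : ⟪y, J x⟫ = 0 := by rw [real_inner_comm, hJxy]
  set P := Submodule.span ℝ {x, J x}
  set Q := Submodule.span ℝ {y, J y}
  have hx : x ∈ P := Submodule.subset_span (by simp)
  have hJx : J x ∈ P := Submodule.subset_span (by simp)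
  have hy : y ∈ Q := Submodule.subset_span (by simp)
  have hJy : J y ∈ Q := Submodule.subset_span (by simp)
  have hPQ {u v : E} : u ∈ P → v ∈ Q → R u v v u = 0 :=
    hK.apply_eq_zero_of_mem_span_pair hJ hxy hJxy
  have hmixed {u : E} (hu : u ∈ P) : R u y (J y) u = 0 := by
    have h := hR.sectional_add_sub_sectional_sub u y (J y)
    rw [hPQ hu (Q.add_mem hy hJy), hPQ hu (Q.sub_mem hy hJy)] at h
    linarith
  have hcross : 2 * R x (J y) (J x) y = R x (J x) (J y) y := by
    have h := hmixed (P.add_mem hx hJx)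
    simp only [map_add, LinearMap.add_apply, hmixed hx, hmixed hJx] at h
    linarith [hR.bianchi x (J x) (J y) y, hR.apply_reverse (J x) (J y) x y,
      hR.antisymm_left y x (J y) (J x), hR.antisymm_left (J y) x (J x) y,
      hR.apply_reverse (J x) y (J y) x, hR.antisymm_right x (J y) (J x) y]
  have e₁ : R (x + y) (J (x - y)) (J (x - y)) (x + y) = 0 :=
    hK.apply_map_right hJ ((real_inner_add_sub_eq_zero_iff x y).2 hnorm)
      (by simp only [map_sub, inner_add_left, inner_sub_right, hJ.inner_map_self, hxJy, hyJx]; ring)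
  have e₂ : R (J (x + y)) (x - y) (x - y) (J (x + y)) = 0 := by
    rw [hR.apply_swap_swap]
    exact hK.apply_map_right hJ
      (by rw [real_inner_comm, (real_inner_add_sub_eq_zero_iff x y).2 hnorm])
      (by simp only [map_add, inner_sub_left, inner_add_right, hJ.inner_map_self, hxJy, hyJx]; ring)
  have hpol := hR.sectional_add_sub_add_sectional_add_sub x y (J x) (J y)
  rw [← map_sub, ← map_add, e₁, e₂, hPQ hx hJy, hR.apply_swap_swap y (J x), hPQ hJx hy] at hpol
  rw [hR.apply_swap_swap (J x), hR.apply_swap_swap (J y)]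
  linarith

end HasVanishingAntiholomorphicCurvature

end

theorem stmt_6_general {E : Type*} [NormedAddCommGroup E] [InnerProductSpace ℝ E]
    {n : ℕ}
    (b : OrthonormalBasis (Fin (2 * n)) ℝ E)
    (J : E →ₗ[ℝ] E)
    (hJ2 : ∀ x : E, J (J x) = -x)
    (hJg : ∀ x y : E, ⟪J x, J y⟫ = ⟪x, y⟫)
    (R : E →ₗ[ℝ] E →ₗ[ℝ] E →ₗ[ℝ] E →ₗ[ℝ] ℝ)
    (hR1 : ∀ x y z u : E, R x y z u = - R y x z u)
    (hR2 : ∀ x y z u : E, R x y z u = - R x y u z)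
    (hRb : ∀ x y z u : E, R x y z u + R y z x u + R z x y u = 0)
    (ν : ℝ)
    (hν : ∀ x y : E, ‖x‖ = 1 → ‖y‖ = 1 → ⟪x, y⟫ = 0 → ⟪J x, y⟫ = 0 →
      R x y y x = ν)
    (S : E → E → ℝ)
    (hS : ∀ x y : E, S x y = ∑ i, R (b i) x y (b i))
    (hν0 : ν = 0) :
    ∀ x y : E, ‖x‖ = 1 → ‖y‖ = 1 → ⟪x, y⟫ = 0 → ⟪J x, y⟫ = 0 →
      R x (J x) (J y) y = 0 → S x x + S y y = 0 := by
  intro x y hx hy hxy hJxy hQ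
  have hR : IsCurvatureTensor R := ⟨hR1, hR2, hRb⟩
  have hJ : IsCompatibleComplexStructure J := ⟨hJ2, hJg⟩
  have hK : HasVanishingAntiholomorphicCurvature J R := .of_norm_eq_one (hν0 ▸ hν)
  rw [hS, hS, hK.ricci_eq_holomorphic hR hJ b hx, hK.ricci_eq_holomorphic hR hJ b hy,
    hK.holomorphic_add_holomorphic_eq hR hJ hxy hJxy (hx.trans hy.symm), hQ, mul_zero]

/-- For an RK-curvature tensor of constant antiholomorphic sectional curvature ν on a
2n-dimensional space (2n ≥ 4): if ν = 0 and R(x,Jx,Jy,y) = 0 for an antiholomorphic orthonormal pair x, y, then S(x,x) + S(y,y) = 0. -/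
theorem stmt_6 {E : Type*} [NormedAddCommGroup E] [InnerProductSpace ℝ E]
    {n : ℕ} (hn : 4 ≤ 2 * n)
    (b : OrthonormalBasis (Fin (2 * n)) ℝ E)
    (J : E →ₗ[ℝ] E)
    (hJ2 : ∀ x : E, J (J x) = -x)
    (hJg : ∀ x y : E, ⟪J x, J y⟫ = ⟪x, y⟫)
    (R : E →ₗ[ℝ] E →ₗ[ℝ] E →ₗ[ℝ] E →ₗ[ℝ] ℝ)
    (hR1 : ∀ x y z u : E, R x y z u = - R y x z u)
    (hR2 : ∀ x y z u : E, R x y z u = - R x y u z)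
    (hRb : ∀ x y z u : E, R x y z u + R y z x u + R z x y u = 0)
    (hRK : ∀ x y z u : E, R x y z u = R (J x) (J y) (J z) (J u))
    (ν : ℝ)
    (hν : ∀ x y : E, ‖x‖ = 1 → ‖y‖ = 1 → ⟪x, y⟫ = 0 → ⟪J x, y⟫ = 0 →
      R x y y x = ν)
    (S : E → E → ℝ)
    (hS : ∀ x y : E, S x y = ∑ i, R (b i) x y (b i))
    (hν0 : ν = 0) :
    ∀ x y : E, ‖x‖ = 1 → ‖y‖ = 1 → ⟪x, y⟫ = 0 → ⟪J x, y⟫ = 0 →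
      R x (J x) (J y) y = 0 → S x x + S y y = 0 :=
  stmt_6_general b J hJ2 hJg R hR1 hR2 hRb ν hν S hS hν0
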